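/- Let X be a Grassmannian frame of m vectors for R^n at angle α > 0 (i.e., X minimizes coherence among all m-element sets of unit vectors, with coherence α). Then the set of non-isolable vectors of X contains at least n+1 vectors. -/

import Mathlib

open scoped RealInnerProductSpace
abbrev E (n : ℕ) := EuclideanSpace ℝ (Fin n)
noncomputable def coh {n : ℕ} (X : Set (E n)) : ℝ :=
  sSup {r : ℝ | ∃ x ∈ X, ∃ y ∈ X, x ≠ y ∧ r = |⟪x, y⟫|}
def IsUnitSet {n : ℕ} (X : Set (E n)) : Prop := ∀ x ∈ X, ‖x‖ = 1
def Isolated {n : ℕ} (X : Set (E n)) (x : E n) : Prop :=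
  ∀ y ∈ X, y ≠ x → |⟪x, y⟫| < coh X
def Isolable {n : ℕ} (X : Set (E n)) (x : E n) : Prop :=
  ∀ ε > 0, ∃ x' : E n, ‖x'‖ = 1 ∧ ‖x - x'‖ < ε ∧ ∀ y ∈ X, y ≠ x → |⟪x', y⟫| < coh X
def Grassmannian {n : ℕ} (m : ℕ) (X : Set (E n)) : Prop :=
  IsUnitSet X ∧ X.Finite ∧ X.ncard = m ∧
    ∀ Y : Set (E n), IsUnitSet Y → Y.Finite → Y.ncard = m → coh X ≤ coh Y

/-!
Suppose at most `n` vectors of `X` are non-isolable. The isolable ones can be moved one at a time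
to unit vectors whose inner products with all others are `< α` in absolute value: every move leaves
a strict margin, so the vectors still to be moved remain isolable. As there are at most `n`
non-isolable vectors, their Gram matrix `G` deforms continuously, inside `ℝⁿ`, into
`(1 - t) G + t I`. For small `t > 0` this keeps the strict margins to the moved vectors and pushes
the remaining inner products strictly below `α`, so coherence `< α` is reached with `m` vectors,
contradicting minimality.
-/

open Module Finset Function

section Isolation

variable {ι V : Type*} [NormedAddCommGroup V] [InnerProductSpace ℝ V]

/-- `Isolable` for indexed families, with an arbitrary threshold `α` in place of `coh X`. -/
def IsolableAt (α : ℝ) (x : ι → V) (i : ι) : Prop :=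
  ∀ ε > 0, ∃ v : V, ‖v‖ = 1 ∧ ‖x i - v‖ < ε ∧ ∀ j, j ≠ i → |⟪v, x j⟫| < α

lemma abs_inner_le_abs_inner_add_norm_mul (u w v : V) : |⟪w, v⟫| ≤ |⟪u, v⟫| + ‖w - u‖ * ‖v‖ := by
  have := abs_real_inner_le_norm (w - u) v
  rw [inner_sub_left] at this
  linarith [abs_sub_abs_le_abs_sub ⟪w, v⟫ ⟪u, v⟫]

lemma IsolableAt.update [DecidableEq ι] {α : ℝ} {x : ι → V} {i a : ι} (hi : IsolableAt α x i)
    (hia : i ≠ a) {v : V} (hv : ‖v‖ = 1) (hiv : |⟪x i, v⟫| < α) :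
    IsolableAt α (update x a v) i := by
  intro ε hε
  obtain ⟨w, hw1, hwi, hw⟩ := hi (min ε (α - |⟪x i, v⟫|)) (lt_min hε (sub_pos.2 hiv))
  refine ⟨w, hw1, by simpa [update_of_ne hia] using hwi.trans_le (min_le_left _ _), fun j hj => ?_⟩
  rcases eq_or_ne j a with rfl | hja
  · have := abs_inner_le_abs_inner_add_norm_mul (x i) w v
    rw [hv, mul_one, ← norm_sub_rev] at this
    rw [update_self]
    linarith [hwi.trans_le (min_le_right _ _)]
  · rw [update_of_ne hja]
    exact hw j hj

lemma exists_isolated_of_isolableAt [DecidableEq ι] {α : ℝ} (R : Finset ι) (x : ι → V)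
    (hx : ∀ i ∈ R, IsolableAt α x i) : ∃ y : ι → V, (∀ j ∉ R, y j = x j) ∧
      ∀ i ∈ R, ‖y i‖ = 1 ∧ ∀ j, j ≠ i → |⟪y i, y j⟫| < α := by
  induction R using Finset.induction_on generalizing x with
  | empty => exact ⟨x, fun _ _ => rfl, by simp⟩
  | insert a R haR ih =>
    obtain ⟨v, hv1, -, hv⟩ := hx a (mem_insert_self a R) 1 one_pos
    have hR : ∀ i ∈ R, i ≠ a := fun i hi => ne_of_mem_of_not_mem hi haR
    obtain ⟨y, hyx, hy⟩ := ih (update x a v) fun i hi =>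
      (hx i (mem_insert_of_mem hi)).update (hR i hi) hv1
        (by rw [real_inner_comm]; exact hv i (hR i hi))
    have hya : y a = v := by rw [hyx a haR, update_self]
    refine ⟨y, fun j hj => ?_, fun i hi => ?_⟩
    · rw [mem_insert, not_or] at hj
      rw [hyx j hj.2, update_of_ne hj.1]
    rcases mem_insert.1 hi with rfl | hi
    · refine ⟨hya ▸ hv1, fun j hj => ?_⟩
      by_cases hjR : j ∈ R
      · rw [real_inner_comm]
        exact (hy j hjR).2 i (hR j hjR).symm
      · rw [hya, hyx j hjR, update_of_ne hj]
        exact hv j hj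
    · exact hy i hi

lemma injective_of_pairwise_abs_inner_lt_one {z : ι → V} (hz1 : ∀ i, ‖z i‖ = 1)
    (hz : Pairwise fun i j => |⟪z i, z j⟫| < 1) : Injective z := fun i j hij => by
  by_contra hne
  have : |⟪z i, z j⟫| < 1 := hz hne
  rw [hij, real_inner_self_eq_norm_sq, hz1, abs_of_nonneg (by norm_num)] at this
  norm_num at this

end Isolation

section Perturbation

variable {F V : Type*} [NormedAddCommGroup F] [InnerProductSpace ℝ F] [FiniteDimensional ℝ F]
  [NormedAddCommGroup V] [InnerProductSpace ℝ V] [FiniteDimensional ℝ V]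

lemma exists_orthonormalBasis_pairwise_inner_map_eq_zero (A : F →ₗ[ℝ] V) :
    ∃ q : OrthonormalBasis (Fin (finrank ℝ F)) ℝ F,
      Pairwise fun i j => ⟪A (q i), A (q j)⟫ = 0 := by
  have hT : (LinearMap.adjoint A ∘ₗ A).IsSymmetric := fun x y => by
    simp only [LinearMap.comp_apply, LinearMap.adjoint_inner_left, LinearMap.adjoint_inner_right]
  refine ⟨hT.eigenvectorBasis rfl, fun i j hij => ?_⟩
  dsimp only
  rw [← LinearMap.adjoint_inner_right, ← LinearMap.comp_apply, hT.apply_eigenvectorBasis,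
    inner_smul_right, (hT.eigenvectorBasis rfl).orthonormal.2 hij, mul_zero]

lemma exists_orthonormal_eq_norm_smul {κ : Type*} [Fintype κ] {a : κ → V}
    (ha : Pairwise fun i j => ⟪a i, a j⟫ = 0) (hcard : Fintype.card κ ≤ finrank ℝ V) :
    ∃ w : κ → V, Orthonormal ℝ w ∧ ∀ i, a i = ‖a i‖ • w i := by
  let v : κ ⊕ Fin (finrank ℝ V - Fintype.card κ) → V := Sum.elim (fun i => ‖a i‖⁻¹ • a i) 0
  have hv : Orthonormal ℝ ((Sum.inl '' {i | a i ≠ 0}).domRestrict v) := by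
    constructor
    · rintro ⟨_, i, hi, rfl⟩
      simp [v, norm_smul, norm_ne_zero_iff.2 hi]
    · rintro ⟨_, i, -, rfl⟩ ⟨_, j, -, rfl⟩
      intro hne
      have hij : i ≠ j := by rintro rfl; exact hne rfl
      simp [v, real_inner_smul_left, real_inner_smul_right, ha hij]
  obtain ⟨b, hb⟩ := hv.exists_orthonormalBasis_extension_of_card_eq (by simp; omega)
  refine ⟨b ∘ Sum.inl, b.orthonormal.comp _ Sum.inl_injective, fun i => ?_⟩
  by_cases hi : a i = 0
  · simp [hi]
  · rw [comp_apply, hb _ ⟨i, hi, rfl⟩]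
    simp only [v, Sum.elim_inl]
    rw [smul_smul, mul_inv_cancel₀ (norm_ne_zero_iff.2 hi), one_smul]

theorem exists_continuous_gram_interpolation {κ : Type*} [Fintype κ] [DecidableEq κ] (s : κ → V)
    (hcard : Fintype.card κ ≤ finrank ℝ V) :
    ∃ u : ℝ → κ → V, (∀ i, Continuous fun t => u t i) ∧ u 0 = s ∧
      ∀ t ∈ Set.Icc (0 : ℝ) 1, ∀ i j,
        ⟪u t i, u t j⟫ = (1 - t) * ⟪s i, s j⟫ + t * if i = j then 1 else 0 := by
  let e := EuclideanSpace.basisFun κ ℝ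
  let A := e.toBasis.constr ℝ s
  obtain ⟨q, hq⟩ := exists_orthonormalBasis_pairwise_inner_map_eq_zero A
  obtain ⟨w, hw, hAw⟩ := exists_orthonormal_eq_norm_smul hq (by simpa using hcard)
  -- `A` maps the orthonormal basis `q` to `‖A (q ℓ)‖ • w ℓ`; rescaling these orthogonal vectors
  -- to squared length `(1 - t) ‖A (q ℓ)‖ ^ 2 + t` interpolates the Gram matrix.
  let c : κ → Fin (finrank ℝ (EuclideanSpace ℝ κ)) → ℝ := fun i ℓ => ⟪q ℓ, e i⟫
  let u : ℝ → κ → V := fun t i => ∑ ℓ, (c i ℓ * √((1 - t) * ‖A (q ℓ)‖ ^ 2 + t)) • w ℓ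
  have hinner : ∀ t i j, ⟪u t i, u t j⟫ =
      ∑ ℓ, c i ℓ * c j ℓ * √((1 - t) * ‖A (q ℓ)‖ ^ 2 + t) ^ 2 := by
    intro t i j
    rw [hw.inner_sum]
    exact sum_congr rfl fun ℓ _ => by simp only [conj_trivial]; ring
  have hu0 : u 0 = s := by
    funext i
    calc u 0 i = ∑ ℓ, c i ℓ • A (q ℓ) := by
          refine sum_congr rfl fun ℓ _ => ?_
          conv_rhs => rw [hAw ℓ, smul_smul]
          norm_num [Real.sqrt_sq (norm_nonneg _)]
      _ = A (e i) := by rw [← q.sum_repr' (e i), map_sum]; simp only [map_smul, c]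
      _ = s i := by simp [A]
  refine ⟨u, fun i => by fun_prop, hu0, fun t ⟨ht0, ht1⟩ i j => ?_⟩
  rw [← orthonormal_iff_ite.1 e.orthonormal, ← q.sum_inner_mul_inner, ← hu0, hinner, hinner,
    mul_sum, mul_sum, ← sum_add_distrib]
  refine sum_congr rfl fun ℓ _ => ?_
  rw [Real.sq_sqrt (by positivity), Real.sq_sqrt (by nlinarith [sq_nonneg ‖A (q ℓ)‖]),
    real_inner_comm (q ℓ) (e i)]
  ring

open Filter Topology in
theorem exists_pairwise_abs_inner_lt {ι : Type*} [Fintype ι] {α : ℝ} (hα : 0 < α) {x : ι → V}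
    (hx : ∀ i, ‖x i‖ = 1) (hle : Pairwise fun i j => |⟪x i, x j⟫| ≤ α)
    (hcard : Nat.card {i // ¬ IsolableAt α x i} ≤ finrank ℝ V) :
    ∃ z : ι → V, (∀ i, ‖z i‖ = 1) ∧ Pairwise fun i j => |⟪z i, z j⟫| < α := by
  classical
  obtain ⟨y, hyx, hy⟩ := exists_isolated_of_isolableAt ({i | IsolableAt α x i} : Finset ι) x
    fun i hi => by simpa using hi
  have hy' : ∀ i j, i ≠ j → (IsolableAt α x i ∨ IsolableAt α x j) → |⟪y i, y j⟫| < α := by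
    rintro i j hij (hi | hj)
    · exact (hy i (by simpa using hi)).2 j hij.symm
    · rw [real_inner_comm]
      exact (hy j (by simpa using hj)).2 i hij
  obtain ⟨u, hu_cont, hu0, hu⟩ := exists_continuous_gram_interpolation
    (fun i : {i // ¬ IsolableAt α x i} => x i) (by rwa [← Nat.card_eq_fintype_card])
  let z : ℝ → ι → V := fun t i => if h : IsolableAt α x i then y i else u t ⟨i, h⟩
  have hz_cont : ∀ i, Continuous fun t => z t i := fun i => by
    by_cases h : IsolableAt α x i
    · simpa [z, h] using continuous_const
    · simpa [z, h] using hu_cont ⟨i, h⟩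
  have hz0 : z 0 = y := funext fun i => by
    by_cases h : IsolableAt α x i
    · simp [z, h]
    · simp [z, h, hu0, hyx i (by simpa using h)]
  have hev : ∀ᶠ t in 𝓝 0, ∀ i j, i ≠ j → (IsolableAt α x i ∨ IsolableAt α x j) →
      |⟪z t i, z t j⟫| < α := by
    refine eventually_all.2 fun i => eventually_all.2 fun j => ?_
    by_cases hij : i ≠ j ∧ (IsolableAt α x i ∨ IsolableAt α x j)
    · have hlim := ((hz_cont i).inner (𝕜 := ℝ) (hz_cont j)).abs.tendsto 0
      rw [hz0] at hlim
      exact (hlim.eventually_lt_const (hy' i j hij.1 hij.2)).mono fun t ht _ _ => ht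
    · exact Eventually.of_forall fun t h1 h2 => absurd ⟨h1, h2⟩ hij
  obtain ⟨t, ht, ht0, ht1⟩ :=
    ((hev.filter_mono nhdsWithin_le_nhds).and (Ioo_mem_nhdsGT one_pos)).exists
  have hzu : ∀ i j (hi : ¬ IsolableAt α x i) (hj : ¬ IsolableAt α x j),
      ⟪z t i, z t j⟫ = (1 - t) * ⟪x i, x j⟫ + t * if i = j then 1 else 0 := by
    intro i j hi hj
    simpa [z, hi, hj, Subtype.ext_iff] using hu t ⟨ht0.le, ht1.le⟩ ⟨i, hi⟩ ⟨j, hj⟩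
  refine ⟨z t, fun i => ?_, fun i j hij => ?_⟩
  · by_cases hi : IsolableAt α x i
    · simpa [z, hi] using (hy i (by simpa using hi)).1
    · have h := hzu i i hi hi
      rw [real_inner_self_eq_norm_sq, real_inner_self_eq_norm_sq, hx] at h
      exact (pow_eq_one_iff_of_nonneg (norm_nonneg _) two_ne_zero).1 (by simpa using h)
  · show |⟪z t i, z t j⟫| < α
    by_cases h : IsolableAt α x i ∨ IsolableAt α x j
    · exact ht i j hij h
    · rw [not_or] at h
      rw [hzu i j h.1 h.2, if_neg hij, mul_zero, add_zero, abs_mul, abs_of_pos (by linarith)]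
      nlinarith [hle hij]

end Perturbation

section Coherence

variable {n : ℕ}

lemma coh_le_one {X : Set (E n)} (hX : IsUnitSet X) : coh X ≤ 1 := by
  refine Real.sSup_le ?_ zero_le_one
  rintro _ ⟨x, hx, y, hy, -, rfl⟩
  simpa [hX x hx, hX y hy] using abs_real_inner_le_norm x y

lemma coh_set_finite {X : Set (E n)} (hX : X.Finite) :
    {r : ℝ | ∃ x ∈ X, ∃ y ∈ X, x ≠ y ∧ r = |⟪x, y⟫|}.Finite := by
  refine ((hX.prod hX).image fun p => |⟪p.1, p.2⟫|).subset ?_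
  rintro _ ⟨x, hx, y, hy, -, rfl⟩
  exact ⟨(x, y), ⟨hx, hy⟩, rfl⟩

lemma abs_inner_le_coh {X : Set (E n)} (hX : X.Finite) {x y : E n} (hx : x ∈ X) (hy : y ∈ X)
    (hxy : x ≠ y) : |⟪x, y⟫| ≤ coh X :=
  le_csSup (coh_set_finite hX).bddAbove ⟨x, hx, y, hy, hxy, rfl⟩

lemma coh_range_lt {ι : Type*} [Finite ι] {α : ℝ} (hα : 0 < α) {z : ι → E n}
    (hz : Pairwise fun i j => |⟪z i, z j⟫| < α) : coh (Set.range z) < α := by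
  have hfin := coh_set_finite (Set.finite_range z)
  obtain h | h :=
    Set.eq_empty_or_nonempty {r : ℝ | ∃ x ∈ Set.range z, ∃ y ∈ Set.range z, x ≠ y ∧ r = |⟪x, y⟫|}
  · rwa [coh, h, Real.sSup_empty]
  · rw [coh, hfin.csSup_lt_iff h]
    rintro _ ⟨_, ⟨i, rfl⟩, _, ⟨j, rfl⟩, hne, rfl⟩
    exact hz fun hij => hne (hij ▸ rfl)

lemma isolableAt_coe_iff {X : Set (E n)} (x : X) :
    IsolableAt (coh X) ((↑) : X → E n) x ↔ Isolable X x := by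
  simp only [IsolableAt, Isolable, Subtype.forall, ne_eq, Subtype.ext_iff]

end Coherence

theorem nonisolable_ge_n_add_one {n m : ℕ} (X : Set (E n))
    (hX : Grassmannian m X) (α : ℝ) (hα : coh X = α) (hpos : 0 < α) :
    n + 1 ≤ {x ∈ X | ¬ Isolable X x}.ncard := by
  obtain ⟨hunit, hfin, rfl, hmin⟩ := hX
  subst hα
  by_contra! hlt
  have := hfin.fintype
  have hcard : Nat.card {i : X // ¬ IsolableAt (coh X) ((↑) : X → E n) i} ≤ finrank ℝ (E n) := by
    simp only [isolableAt_coe_iff, finrank_euclideanSpace_fin]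
    rw [← Nat.card_coe_set_eq] at hlt
    rw [Nat.card_congr (Equiv.subtypeSubtypeEquivSubtypeInter (· ∈ X) fun x => ¬ Isolable X x)]
    exact Nat.le_of_lt_succ hlt
  obtain ⟨z, hz1, hz⟩ := exists_pairwise_abs_inner_lt hpos (fun i : X => hunit i i.2)
    (fun i j hij => abs_inner_le_coh hfin i.2 j.2 (Subtype.coe_ne_coe.2 hij)) hcard
  have hinj : Injective z :=
    injective_of_pairwise_abs_inner_lt_one hz1 fun i j hij => (hz hij).trans_le (coh_le_one hunit)
  have := hmin (Set.range z) (Set.forall_mem_range.2 hz1) (Set.finite_range z)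
    (by rw [Set.ncard_range_of_injective hinj, Nat.card_coe_set_eq])
  exact (coh_range_lt hpos hz).not_ge this
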